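/- arXiv:2508.05822 — 2 statements merged into one kernel-verified Lean document; each statement's English description precedes it below -/
import Mathlib

section
/- Let G = (V, E) be a finite directed graph with no self-loops and let z = (x, a⁺, a⁻) ∈ ℤ^V × ℤ^E × ℤ^E satisfy x_u − x_v = a⁺_{(u,v)} − a⁻_{(u,v)} for every (u,v) ∈ E. (i) Suppose x_v > 0 for some v; let c = max{x_v : v ∈ V}, and let S be the vertex set of a connected component of the subgraph induced by {v ∈ V : x_v = c}. Then there exists g = (g_x, g⁺, g⁻) ∈ ℤ^V × ℤ^E × ℤ^E with (g_x)_u − (g_x)_w = g⁺_{(u,w)} − g⁻_{(u,w)} for every (u,w) ∈ E, such that g_x = χ_S and g ⊑ z. (ii) Analogously, if x_v < 0 for some v, c = min{x_v : v ∈ V}, and S is a connected component of {v : x_v = c}, then there exists such a g with g_x = −χ_S and g ⊑ z. -/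
open scoped Classical

/-- The undirected support graph of the directed edge set `E`. -/
def undirGraph {V : Type*} (E : Finset (V × V)) : SimpleGraph V where
  Adj u v := u ≠ v ∧ ((u, v) ∈ E ∨ (v, u) ∈ E)
  symm := by
    constructor
    intro u v h
    exact ⟨h.1.symm, h.2.elim Or.inr Or.inl⟩
  loopless := by constructor; intro u h; exact h.1 rfl

/-- `S ⊆ V` induces a connected subgraph of the (undirected version of the) graph. -/
def InducesConnected {V : Type*} (E : Finset (V × V)) (S : Set V) : Prop :=
  S.Nonempty ∧ ((undirGraph E).induce S).Connected

/-- Integer indicator vector of a set of vertices. -/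
noncomputable def chiV {V : Type*} (S : Set V) : V → ℤ :=
  S.indicator 1

/-- Integer indicator vector of a set of edges. -/
noncomputable def chiE {V : Type*} {E : Finset (V × V)}
    (T : Set {e : V × V // e ∈ E}) : {e : V × V // e ∈ E} → ℤ :=
  T.indicator 1

/-- Outgoing edges of `S`. -/
def deltaPlus {V : Type*} (E : Finset (V × V)) (S : Set V) :
    Set {e : V × V // e ∈ E} :=
  {e | (e : V × V).1 ∈ S ∧ (e : V × V).2 ∉ S}

/-- Incoming edges of `S`. -/
def deltaMinus {V : Type*} (E : Finset (V × V)) (S : Set V) :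
    Set {e : V × V // e ∈ E} :=
  {e | (e : V × V).1 ∉ S ∧ (e : V × V).2 ∈ S}

/-- The conformal (sign-compatible, coordinatewise) partial order `x ⊑ y`. -/
def Sqle {ι : Type*} (x y : ι → ℤ) : Prop :=
  ∀ i, 0 ≤ x i * y i ∧ |x i| ≤ |y i|

/-- `(x, a)` lies in the integer kernel of `A_TV`. -/
def InKerATV {V : Type*} (E : Finset (V × V)) (x : V → ℤ)
    (a : {e : V × V // e ∈ E} → ℤ) : Prop :=
  ∀ e : {e : V × V // e ∈ E}, x (e : V × V).1 - x (e : V × V).2 = a e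

/-- `(x, a)` is a Graver basis element of `A_TV`: a `⊑`-minimal nonzero
element of the integer kernel. -/
def InGraverATV {V : Type*} (E : Finset (V × V)) (x : V → ℤ)
    (a : {e : V × V // e ∈ E} → ℤ) : Prop :=
  InKerATV E x a ∧ ¬(x = 0 ∧ a = 0) ∧
    ∀ (x' : V → ℤ) (a' : {e : V × V // e ∈ E} → ℤ),
      InKerATV E x' a' → ¬(x' = 0 ∧ a' = 0) → Sqle x' x → Sqle a' a →
        x' = x ∧ a' = a

/-- `(x, a⁺, a⁻)` lies in the integer kernel of `A'_TV`. -/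
def InKerATV' {V : Type*} (E : Finset (V × V)) (x : V → ℤ)
    (ap am : {e : V × V // e ∈ E} → ℤ) : Prop :=
  ∀ e : {e : V × V // e ∈ E}, x (e : V × V).1 - x (e : V × V).2 = ap e - am e

/-- `S` is the vertex set of a connected component of the subgraph induced by
`W`: `S ⊆ W`, `S` induces a connected subgraph, and `S` is maximal with these
properties. -/
def IsConnCompOf {V : Type*} (E : Finset (V × V)) (W S : Set V) : Prop :=
  S ⊆ W ∧ InducesConnected E S ∧
    ∀ S' : Set V, S ⊆ S' → S' ⊆ W → InducesConnected E S' → S' = S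

/-! Take `g_x = χ_S`. As `S` is a maximal connected piece of the top level set, every neighbour
of `S` outside `S` has strictly smaller `x`, so across each edge the jump of `χ_S` lies between
`0` and the jump `x_u - x_w = a⁺ - a⁻`. Any integer between `0` and `a⁺ - a⁻` is a difference
`g⁺ - g⁻` with `g⁺` between `0` and `a⁺` and `g⁻` between `0` and `a⁻`, i.e. conformally below
`(a⁺, a⁻)`. The minimum case is the maximum case for `-z`. -/

open Set
open scoped Interval

theorem Int.mem_uIcc_zero_iff {a b : ℤ} : a ∈ [[0, b]] ↔ 0 ≤ a * b ∧ |a| ≤ |b| := by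
  have of_nonneg : ∀ {a b : ℤ}, 0 ≤ b → (a ∈ [[0, b]] ↔ 0 ≤ a * b ∧ |a| ≤ |b|) := by
    intro a b hb
    rw [uIcc_of_le hb, mem_Icc, abs_of_nonneg hb]
    constructor
    · rintro ⟨h0, h1⟩
      exact ⟨mul_nonneg h0 hb, abs_le.2 ⟨by linarith, h1⟩⟩
    · rintro ⟨hmul, habs⟩
      rcases hb.eq_or_lt with rfl | hb
      · exact ⟨(abs_nonpos_iff.1 habs).ge, (abs_nonpos_iff.1 habs).le⟩
      · exact ⟨nonneg_of_mul_nonneg_left hmul hb, (le_abs_self a).trans habs⟩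
  rcases le_total 0 b with hb | hb
  · exact of_nonneg hb
  · have := of_nonneg (a := -a) (neg_nonneg.2 hb)
    rw [neg_mul_neg, abs_neg, abs_neg] at this
    rw [← this, mem_uIcc, mem_uIcc]
    omega

theorem sqle_iff_forall_mem_uIcc {ι : Type*} {x y : ι → ℤ} :
    Sqle x y ↔ ∀ i, x i ∈ [[0, y i]] := by
  simp only [Sqle, Int.mem_uIcc_zero_iff]

theorem Sqle.neg {ι : Type*} {x y : ι → ℤ} (h : Sqle x y) : Sqle (-x) (-y) := by
  simpa only [Sqle, Pi.neg_apply, neg_mul_neg, abs_neg] using h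

theorem Int.exists_sub_eq_of_mem_uIcc_sub {p m d : ℤ} (h : d ∈ [[0, p - m]]) :
    ∃ p' ∈ [[0, p]], ∃ m' ∈ [[0, m]], p' - m' = d := by
  simp only [mem_uIcc] at h ⊢
  rcases le_total 0 d with hd | hd
  · exact ⟨min d (max 0 p), by omega, min d (max 0 p) - d, by omega, by omega⟩
  · exact ⟨max d (min 0 p), by omega, max d (min 0 p) - d, by omega, by omega⟩

section Kernel

variable {V : Type*} {E : Finset (V × V)} {x : V → ℤ} {ap am : {e : V × V // e ∈ E} → ℤ}

theorem InKerATV'.neg (h : InKerATV' E x ap am) : InKerATV' E (-x) (-ap) (-am) := fun e => by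
  simp only [Pi.neg_apply]
  linarith [h e]

theorem InKerATV'.exists_sqle_of_mem_uIcc (h : InKerATV' E x ap am) (gx : V → ℤ)
    (hgx : ∀ e : {e : V × V // e ∈ E}, gx e.1.1 - gx e.1.2 ∈ [[0, x e.1.1 - x e.1.2]]) :
    ∃ gp gm : {e : V × V // e ∈ E} → ℤ, InKerATV' E gx gp gm ∧ Sqle gp ap ∧ Sqle gm am := by
  have split e := Int.exists_sub_eq_of_mem_uIcc_sub (h e ▸ hgx e)
  choose gp hgp gm hgm hsub using split
  exact ⟨gp, gm, fun e => (hsub e).symm, sqle_iff_forall_mem_uIcc.2 hgp,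
    sqle_iff_forall_mem_uIcc.2 hgm⟩

end Kernel

theorem IsConnCompOf.mem_of_adj {V : Type*} {E : Finset (V × V)} {W S : Set V}
    (hS : IsConnCompOf E W S) {u v : V} (hu : u ∈ S) (hv : v ∈ W)
    (huv : (undirGraph E).Adj u v) : v ∈ S := by
  have hconn : InducesConnected E (S ∪ {u, v}) :=
    ⟨⟨u, .inl hu⟩, SimpleGraph.induce_union_connected hS.2.1.2.preconnected
      (SimpleGraph.induce_pair_connected_of_adj huv).preconnected ⟨u, hu, .inl rfl⟩⟩
  have hsub : S ∪ {u, v} ⊆ W :=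
    union_subset hS.1 (insert_subset (hS.1 hu) (singleton_subset_iff.2 hv))
  rw [← hS.2.2 _ subset_union_left hsub hconn]
  exact .inr (.inr rfl)

theorem IsConnCompOf.chiV_sub_mem_uIcc {V : Type*} {E : Finset (V × V)} {x : V → ℤ} {c : ℤ}
    {S : Set V} (hS : IsConnCompOf E {v | x v = c} S) (hmax : ∀ v, x v ≤ c) {u w : V}
    (huw : (u, w) ∈ E) : chiV S u - chiV S w ∈ [[0, x u - x w]] := by
  have lower : ∀ {a b : V}, a ∈ S → b ∉ S → (undirGraph E).Adj a b → x b < c :=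
    fun ha hb hab => (hmax _).lt_of_ne fun hbc => hb (hS.mem_of_adj ha hbc hab)
  simp only [chiV, indicator_apply, Pi.one_apply, mem_uIcc]
  by_cases hu : u ∈ S <;> by_cases hw : w ∈ S <;> simp only [hu, hw, if_true, if_false]
  · omega
  · have := lower hu hw ⟨ne_of_mem_of_not_mem hu hw, .inl huw⟩
    have : x u = c := hS.1 hu
    omega
  · have := lower hw hu ⟨ne_of_mem_of_not_mem hw hu, .inr huw⟩
    have : x w = c := hS.1 hw
    omega
  · omega

theorem exists_kerATV'_chiV_of_isConnCompOf {V : Type*} {E : Finset (V × V)} {x : V → ℤ}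
    {ap am : {e : V × V // e ∈ E} → ℤ} (hker : InKerATV' E x ap am) {c : ℤ} {S : Set V}
    (hc : 0 < c) (hmax : ∀ v, x v ≤ c) (hS : IsConnCompOf E {v | x v = c} S) :
    ∃ gp gm : {e : V × V // e ∈ E} → ℤ,
      InKerATV' E (chiV S) gp gm ∧ Sqle (chiV S) x ∧ Sqle gp ap ∧ Sqle gm am := by
  obtain ⟨gp, gm, hg, hp, hm⟩ :=
    hker.exists_sqle_of_mem_uIcc (chiV S) fun e => hS.chiV_sub_mem_uIcc hmax e.2
  refine ⟨gp, gm, hg, sqle_iff_forall_mem_uIcc.2 fun v => ?_, hp, hm⟩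
  by_cases hv : v ∈ S
  · have : x v = c := hS.1 hv
    simp only [chiV, indicator_of_mem hv, Pi.one_apply, mem_uIcc]
    omega
  · simp [chiV, indicator_of_notMem hv]

theorem level_set_component_majorized_ATV'_general
    {V : Type*} (E : Finset (V × V))
    (x : V → ℤ) (ap am : {e : V × V // e ∈ E} → ℤ)
    (hker : InKerATV' E x ap am) :
    (∀ (c : ℤ) (S : Set V), (∃ v, 0 < x v) →
      IsGreatest (Set.range x) c →
      IsConnCompOf E {v | x v = c} S →
      ∃ (gx : V → ℤ) (gp gm : {e : V × V // e ∈ E} → ℤ),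
        InKerATV' E gx gp gm ∧ gx = chiV S ∧
        Sqle gx x ∧ Sqle gp ap ∧ Sqle gm am) ∧
    (∀ (c : ℤ) (S : Set V), (∃ v, x v < 0) →
      IsLeast (Set.range x) c →
      IsConnCompOf E {v | x v = c} S →
      ∃ (gx : V → ℤ) (gp gm : {e : V × V // e ∈ E} → ℤ),
        InKerATV' E gx gp gm ∧ gx = -chiV S ∧
        Sqle gx x ∧ Sqle gp ap ∧ Sqle gm am) := by
  refine ⟨fun c S ⟨v, hv⟩ hc hS => ?_, fun c S ⟨v, hv⟩ hc hS => ?_⟩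
  · obtain ⟨gp, gm, hg, hx, hp, hm⟩ := exists_kerATV'_chiV_of_isConnCompOf hker
      (hv.trans_le (hc.2 ⟨v, rfl⟩)) (fun u => hc.2 ⟨u, rfl⟩) hS
    exact ⟨chiV S, gp, gm, hg, rfl, hx, hp, hm⟩
  · have hS' : IsConnCompOf E {u | (-x) u = -c} S := by
      simpa only [Pi.neg_apply, neg_inj] using hS
    obtain ⟨gp, gm, hg, hx, hp, hm⟩ := exists_kerATV'_chiV_of_isConnCompOf hker.neg
      (neg_pos.2 ((hc.2 ⟨v, rfl⟩).trans_lt hv)) (fun u => neg_le_neg (hc.2 ⟨u, rfl⟩)) hS'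
    exact ⟨-chiV S, -gp, -gm, hg.neg, rfl, by simpa using hx.neg, by simpa using hp.neg,
      by simpa using hm.neg⟩

/-- If `z = (x, a⁺, a⁻)` lies in the integer kernel of
`A'_TV`, `c` is the maximum value of `x` (positive somewhere), and `S` is a
connected component of the level set `{v : x_v = c}`, then there is an element
`g` of the integer kernel with vertex part `χ_S` and `g ⊑ z`; analogously for
the minimum (negative) value with vertex part `−χ_S`. -/
theorem level_set_component_majorized_ATV'
    {V : Type*} [Fintype V] [DecidableEq V] (E : Finset (V × V))
    (hloop : ∀ e ∈ E, e.1 ≠ e.2)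
    (x : V → ℤ) (ap am : {e : V × V // e ∈ E} → ℤ)
    (hker : InKerATV' E x ap am) :
    (∀ (c : ℤ) (S : Set V), (∃ v, 0 < x v) →
      IsGreatest (Set.range x) c →
      IsConnCompOf E {v | x v = c} S →
      ∃ (gx : V → ℤ) (gp gm : {e : V × V // e ∈ E} → ℤ),
        InKerATV' E gx gp gm ∧ gx = chiV S ∧
        Sqle gx x ∧ Sqle gp ap ∧ Sqle gm am) ∧
    (∀ (c : ℤ) (S : Set V), (∃ v, x v < 0) →
      IsLeast (Set.range x) c →
      IsConnCompOf E {v | x v = c} S →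
      ∃ (gx : V → ℤ) (gp gm : {e : V × V // e ∈ E} → ℤ),
        InKerATV' E gx gp gm ∧ gx = -chiV S ∧
        Sqle gx x ∧ Sqle gp ap ∧ Sqle gm am) :=
  level_set_component_majorized_ATV'_general E x ap am hker
end

section
/- Let G = (V, E) be a finite directed graph with no self-loops and let S ⊆ V induce a connected subgraph. Then the vector g_S = (χ_S, χ_{δ⁺(S)} − χ_{δ⁻(S)}) ∈ ℤ^V × ℤ^E is a ⊑-minimal element of (ker_ℤ(A_TV)) \ {0}; that is, g_S lies in the Graver basis 𝔊_{A_TV}. -/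
open scoped Classical

/-!
The kernel condition says that `a` is the coboundary `e ↦ x e.1 - x e.2` of `x`, so an element
of the kernel is determined by its vertex part. If `(x', a') ⊑ g_S` then `x'` is a `0/1` vector
supported in `S`, and `a'` vanishes on the edges inside `S`, where `g_S` vanishes; hence `x'` is
constant along the edges inside `S`, so constant on the connected set `S`. Being nonzero,
`x' = χ_S`, and then `a'` is forced to be the edge part of `g_S`.
-/

theorem SimpleGraph.Reachable.eq_of_forall_adj {α β : Type*} {G : SimpleGraph α} {f : α → β}
    (hf : ∀ a b, G.Adj a b → f a = f b) {u v : α} (huv : G.Reachable u v) : f u = f v := by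
  obtain ⟨w⟩ := huv
  induction w with
  | nil => rfl
  | cons hadj _ ih => exact (hf _ _ hadj).trans ih

theorem InducesConnected.eq_of_forall_edge {V β : Type*} {E : Finset (V × V)} {S : Set V}
    (hS : InducesConnected E S) {f : V → β}
    (hf : ∀ e ∈ E, e.1 ∈ S → e.2 ∈ S → f e.1 = f e.2) {u v : V} (hu : u ∈ S) (hv : v ∈ S) :
    f u = f v := by
  refine (hS.2.preconnected ⟨u, hu⟩ ⟨v, hv⟩).eq_of_forall_adj (f := fun p : S => f p) ?_
  rintro ⟨p, hp⟩ ⟨q, hq⟩ ⟨-, hpq | hqp⟩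
  · exact hf _ hpq hp hq
  · exact (hf _ hqp hq hp).symm

theorem chiV_apply {V : Type*} (S : Set V) (u : V) : chiV S u = if u ∈ S then 1 else 0 :=
  Set.indicator_apply S 1 u

theorem chiV_ne_zero {V : Type*} {S : Set V} (hS : S.Nonempty) : chiV S ≠ 0 := by
  obtain ⟨u, hu⟩ := hS
  intro h
  simpa [chiV_apply, hu] using congrFun h u

section Sqle

variable {ι : Type*} {x y : ι → ℤ} {i : ι}

theorem Sqle.eq_zero_of_eq_zero (h : Sqle x y) (hi : y i = 0) : x i = 0 := by
  simpa [hi] using (h i).2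

theorem Sqle.eq_one_of_eq_one (h : Sqle x y) (hi : y i = 1) (hx : x i ≠ 0) : x i = 1 := by
  obtain ⟨hsign, habs⟩ := h i
  rw [hi] at hsign habs
  rw [abs_one, abs_le] at habs
  omega

theorem eq_chiV_of_sqle {S : Set ι} (h : Sqle x (chiV S)) (hx : x ≠ 0)
    (hconst : ∀ u ∈ S, ∀ v ∈ S, x u = x v) : x = chiV S := by
  have off_S : ∀ u ∉ S, x u = 0 := fun u hu =>
    h.eq_zero_of_eq_zero (by simp [chiV_apply, hu])
  obtain ⟨u₀, hu₀⟩ : ∃ u, x u ≠ 0 := Function.ne_iff.mp hx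
  have hu₀S : u₀ ∈ S := by_contra fun hu => hu₀ (off_S u₀ hu)
  have hx₀ : x u₀ = 1 := h.eq_one_of_eq_one (by simp [chiV_apply, hu₀S]) hu₀
  funext u
  by_cases hu : u ∈ S
  · rw [chiV_apply, if_pos hu, hconst u hu u₀ hu₀S, hx₀]
  · rw [chiV_apply, if_neg hu, off_S u hu]

end Sqle

section InKerATV

variable {V : Type*} {E : Finset (V × V)} {x : V → ℤ} {a b : {e : V × V // e ∈ E} → ℤ}

theorem InKerATV.unique (ha : InKerATV E x a) (hb : InKerATV E x b) : a = b :=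
  funext fun e => (ha e).symm.trans (hb e)

theorem InKerATV.eq_of_apply_eq_zero (ha : InKerATV E x a) {e : {e : V × V // e ∈ E}}
    (he : a e = 0) : x (e : V × V).1 = x (e : V × V).2 :=
  sub_eq_zero.mp ((ha e).trans he)

theorem inKerATV_zero : InKerATV E 0 0 := fun _ => sub_self 0

theorem inKerATV_chiV (S : Set V) :
    InKerATV E (chiV S) (chiE (deltaPlus E S) - chiE (deltaMinus E S)) := by
  intro e
  by_cases h₁ : (e : V × V).1 ∈ S <;> by_cases h₂ : (e : V × V).2 ∈ S <;>
    simp [chiV_apply, chiE, deltaPlus, deltaMinus, h₁, h₂]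

end InKerATV

theorem connected_indicator_mem_graver_general
    {V : Type*} (E : Finset (V × V))
    (S : Set V) (hS : InducesConnected E S) :
    InGraverATV E (chiV S) (chiE (deltaPlus E S) - chiE (deltaMinus E S)) := by
  have hker := inKerATV_chiV (E := E) S
  refine ⟨hker, fun h => chiV_ne_zero hS.1 h.1, ?_⟩
  intro x' a' hker' hne hx ha
  have hx' : x' ≠ 0 := by
    rintro rfl
    exact hne ⟨rfl, hker'.unique inKerATV_zero⟩
  have hinside : ∀ e ∈ E, e.1 ∈ S → e.2 ∈ S → x' e.1 = x' e.2 := by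
    intro e he h₁ h₂
    have hgS : (chiE (deltaPlus E S) - chiE (deltaMinus E S)) ⟨e, he⟩ = 0 := by
      rw [← hker ⟨e, he⟩, chiV_apply, chiV_apply, if_pos h₁, if_pos h₂, sub_self]
    exact hker'.eq_of_apply_eq_zero (ha.eq_zero_of_eq_zero hgS)
  obtain rfl : x' = chiV S :=
    eq_chiV_of_sqle hx hx' fun u hu v hv => hS.eq_of_forall_edge hinside hu hv
  exact ⟨rfl, hker'.unique hker⟩

/-- For every `S ⊆ V` inducing a connected subgraph, the
vector `g_S = (χ_S, χ_{δ⁺(S)} − χ_{δ⁻(S)})` is a `⊑`-minimal element of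
`ker_ℤ(A_TV) \ {0}`, i.e. it lies in the Graver basis `𝔊_{A_TV}`. -/
theorem connected_indicator_mem_graver
    {V : Type*} [Fintype V] [DecidableEq V] (E : Finset (V × V))
    (hloop : ∀ e ∈ E, e.1 ≠ e.2)
    (S : Set V) (hS : InducesConnected E S) :
    InGraverATV E (chiV S) (chiE (deltaPlus E S) - chiE (deltaMinus E S)) :=
  connected_indicator_mem_graver_general E S hS
end
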